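/- Structural constraint on same-depth weights differing in one decision (Lemma 1): let the induced tree weights ω be defined by the recursion ω_{r_{1:i}} = W^{i+1}_{1:D} + Σ_{k=1}^{i} W^{i+1}_{D+k} · r_k · ω_{r_{1:k−1}} with ω_{r_{1:0}} = W^1. If two patterns r_{1:i}, r'_{1:i} ∈ {0,1}^i agree in all coordinates except coordinate j (where r_j ≠ r'_j), then there exists a scalar α ∈ ℝ such that ω_{r_{1:i}} − ω_{r'_{1:i}} = α · ω_{r_{1:j−1}} (note r_{1:j−1} = r'_{1:j−1}). -/

import Mathlib

/-!
Expanding the recursion at depth `i`, the `k`-th summand of `ω_r - ω_{r'}` vanishes for `k < j`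
(same decision, same earlier weight), is a multiple of `ω_{r_{1:j-1}}` for `k = j`, and for `k > j`
is a multiple of `ω_{r_{1:k-1}} - ω_{r'_{1:k-1}}`, which lies in the span of `ω_{r_{1:j-1}}` by
induction on the depth.
-/

/-- The decision weights of the oblique decision tree induced by a locally
constant network with one neuron per layer. -/
noncomputable def omega {D : ℕ} (W1 : Fin D → ℝ) (Win : ℕ → Fin D → ℝ)
    (Wrec : ℕ → ℕ → ℝ) (r : ℕ → Bool) : ℕ → (Fin D → ℝ)
  | 0 => W1
  | (i + 1) => fun j =>
      Win (i + 1) j +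
        ∑ k ∈ (Finset.Icc 1 (i + 1)).attach,
          Wrec (i + 1) k.1 * (if r k.1 then 1 else 0) *
            omega W1 Win Wrec r (k.1 - 1) j
  decreasing_by
    have := Finset.mem_Icc.mp k.2
    omega

section
variable {D : ℕ} (W1 : Fin D → ℝ) (Win : ℕ → Fin D → ℝ) (Wrec : ℕ → ℕ → ℝ)

theorem omega_zero (r : ℕ → Bool) : omega W1 Win Wrec r 0 = W1 := by
  rw [omega]

theorem omega_succ (r : ℕ → Bool) (i : ℕ) :
    omega W1 Win Wrec r (i + 1) = Win (i + 1) +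
      ∑ k ∈ Finset.Icc 1 (i + 1),
        (Wrec (i + 1) k * if r k then 1 else 0) • omega W1 Win Wrec r (k - 1) := by
  ext idx
  rw [omega]
  simp only [Pi.add_apply, Finset.sum_apply, Pi.smul_apply, smul_eq_mul]
  exact congrArg _ (Finset.sum_attach _ fun k =>
    (Wrec (i + 1) k * if r k then 1 else 0) * omega W1 Win Wrec r (k - 1) idx)

theorem omega_congr {i : ℕ} {r r' : ℕ → Bool} (h : ∀ k ∈ Finset.Icc 1 i, r k = r' k) :
    omega W1 Win Wrec r i = omega W1 Win Wrec r' i := by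
  induction i using Nat.strong_induction_on with
  | _ i ih =>
    rcases i with _ | m
    · rw [omega_zero, omega_zero]
    rw [omega_succ, omega_succ]
    refine congrArg _ (Finset.sum_congr rfl fun k hk => ?_)
    have hk := Finset.mem_Icc.mp hk
    rw [h k (Finset.mem_Icc.mpr hk), ih (k - 1) (by omega) fun l hl => h l (by
      simp only [Finset.mem_Icc] at hl ⊢; omega)]

theorem omega_sub_mem_span {i j : ℕ} (hj1 : 1 ≤ j) (hji : j ≤ i) {r r' : ℕ → Bool}
    (hagree : ∀ k ∈ Finset.Icc 1 i, k ≠ j → r k = r' k) :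
    omega W1 Win Wrec r i - omega W1 Win Wrec r' i ∈
      ℝ ∙ omega W1 Win Wrec r (j - 1) := by
  induction i using Nat.strong_induction_on with
  | _ i ih =>
    obtain ⟨m, rfl⟩ : ∃ m, i = m + 1 := ⟨i - 1, by omega⟩
    rw [omega_succ, omega_succ, add_sub_add_left_eq_sub, ← Finset.sum_sub_distrib]
    refine Submodule.sum_mem _ fun k hk => ?_
    have hk := Finset.mem_Icc.mp hk
    have hprefix : k ≤ j → omega W1 Win Wrec r (k - 1) = omega W1 Win Wrec r' (k - 1) :=
      fun hkj => omega_congr W1 Win Wrec fun l hl => by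
        simp only [Finset.mem_Icc] at hl
        exact hagree l (Finset.mem_Icc.mpr (by omega)) (by omega)
    rcases lt_trichotomy k j with hlt | rfl | hgt
    · rw [hprefix hlt.le, hagree k (Finset.mem_Icc.mpr hk) hlt.ne, sub_self]
      exact zero_mem _
    · rw [hprefix le_rfl, ← sub_smul]
      exact Submodule.smul_mem _ _ (Submodule.mem_span_singleton_self _)
    · rw [hagree k (Finset.mem_Icc.mpr hk) hgt.ne', ← smul_sub]
      refine Submodule.smul_mem _ _ (ih (k - 1) (by omega) (by omega) fun l hl hlj => ?_)
      simp only [Finset.mem_Icc] at hl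
      exact hagree l (Finset.mem_Icc.mpr (by omega)) hlj

end

theorem omega_structural_constraint_general {D : ℕ} (W1 : Fin D → ℝ)
    (Win : ℕ → Fin D → ℝ) (Wrec : ℕ → ℕ → ℝ)
    (i j : ℕ) (hj1 : 1 ≤ j) (hji : j ≤ i)
    (r r' : ℕ → Bool)
    (hagree : ∀ k ∈ Finset.Icc 1 i, k ≠ j → r k = r' k) :
    ∃ α : ℝ, ∀ idx : Fin D,
      omega W1 Win Wrec r i idx - omega W1 Win Wrec r' i idx
        = α * omega W1 Win Wrec r (j - 1) idx := by
  obtain ⟨α, hα⟩ :=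
    Submodule.mem_span_singleton.mp (omega_sub_mem_span W1 Win Wrec hj1 hji hagree)
  exact ⟨α, fun idx => (congrFun hα idx).symm⟩

/-- Lemma 1: if two depth-i patterns differ exactly in
coordinate j, the corresponding weights differ by a multiple of ω_{r_{1:j−1}}. -/
theorem omega_structural_constraint {D : ℕ} (W1 : Fin D → ℝ)
    (Win : ℕ → Fin D → ℝ) (Wrec : ℕ → ℕ → ℝ)
    (i j : ℕ) (hj1 : 1 ≤ j) (hji : j ≤ i)
    (r r' : ℕ → Bool)
    (hagree : ∀ k ∈ Finset.Icc 1 i, k ≠ j → r k = r' k)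
    (hdiff : r j ≠ r' j) :
    ∃ α : ℝ, ∀ idx : Fin D,
      omega W1 Win Wrec r i idx - omega W1 Win Wrec r' i idx
        = α * omega W1 Win Wrec r (j - 1) idx :=
  omega_structural_constraint_general W1 Win Wrec i j hj1 hji r r' hagree
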